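/- arXiv:2503.00511 — 2 statements merged into one kernel-verified Lean document; each statement's English description precedes it below -/
import Mathlib

section
/- Every model of autonomous systems induces a consistent Bayesian filtering interpretation in the possibilistic sense: let upd_X : X → X, upd_M : M → M, and μ : X → M surjective with μ ∘ upd_X = upd_M ∘ μ. Define c : X × M → M by c(x, m) = upd_M(m), the interpretation map ψ = μ⁻¹ : M → P⁺(X), and the possibilistic hidden Markov model κ : X → P⁺(X × X) by κ(x) = {(x', x') | μ(x') = μ(upd_X(x))}. Then the consistency equation holds: for every m ∈ M, the set {(x'', y) | ∃ x ∈ μ⁻¹(m), (y, x') ∈ κ(x), x'' = x'} equals {(x'', y) | ∃ x ∈ μ⁻¹(m), (y, x₀) ∈ κ(x), x'' ∈ μ⁻¹(c(y, m))}; concretely, for each observation y ∈ ◇upd_X(x) with x ∈ μ⁻¹(m), the posterior set μ⁻¹(upd_M(m)) equals the set of possible updated hidden states {x' | ∃ x ∈ μ⁻¹(m), μ(x') = μ(upd_X(x))}. -/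
/-- The possibilistic hidden Markov model induced by a model of autonomous
systems: `κ(x) = {(x', x') | μ x' = μ (upd_X x)}`. -/
def kappa {X M : Type*} (updX : X → X) (μ : X → M) (x : X) : Set (X × X) :=
  {q : X × X | q.1 = q.2 ∧ μ q.1 = μ (updX x)}

/-- Every model of autonomous systems induces a consistent Bayesian filtering
interpretation in the possibilistic sense: with reasoner `c (y, m) = upd_M m`,
interpretation map `ψ = μ⁻¹` and hidden Markov model `κ`, the consistency
equation holds: for every prior parameter `m` and observation `y`, the set of
possible updated hidden states equals the posterior belief `ψ (c (y, m))`. -/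
theorem model_induces_filtering_interpretation
    {X M : Type*} (updX : X → X) (updM : M → M)
    (μ : X → M) (hsurj : Function.Surjective μ)
    (hcomm : ∀ x : X, μ (updX x) = updM (μ x)) :
    ∀ (c : X → M → M) (ψ : M → Set X),
      (∀ y m, c y m = updM m) →
      (∀ m, ψ m = {x : X | μ x = m}) →
      ∀ (m : M) (y : X),
        (⋃ x ∈ ψ m, {x' : X | (x', x') ∈ kappa updX μ x}) = ψ (c y m) := by
  intro c ψ hc hψ m y
  obtain ⟨x₀, hx₀⟩ := hsurj m
  ext x'
  simp only [hψ, hc, kappa, Set.mem_iUnion, Set.mem_setOf_eq]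
  constructor
  · rintro ⟨x, hx, -, hx'⟩
    rw [hx', hcomm, hx]
  · intro h
    exact ⟨x₀, hx₀, trivial, by rw [hcomm, hx₀, h]⟩
end

section
/- In the Markov category of total relations, Bayesian inverses exist: for any total relation f : X → P⁺(Y) and any nonempty prior p ⊆ X, there exists a total relation f† : Y → P⁺(X) such that the joint relation agrees: {(x, y) | x ∈ p, y ∈ f(x)} = {(x, y) | ∃ x₀ ∈ p, y ∈ f(x₀), x ∈ f†(y)} — i.e., for every y in the image {y | ∃ x ∈ p, y ∈ f(x)}, one can take f†(y) = {x ∈ p | y ∈ f(x)}, and this choice satisfies the equation. -/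
/-- Bayesian inverses exist in the Markov category of total relations: for any
total relation `f` and nonempty prior `p`, there is a total relation `f†`,
agreeing on the image with `y ↦ {x ∈ p | y ∈ f x}`, such that the joint
possibilistic Bayes equation holds. -/
theorem possibilistic_bayesian_inverse_exists
    {X Y : Type*} (f : X → Set Y) (hf : ∀ x, (f x).Nonempty)
    (p : Set X) (hp : p.Nonempty) :
    ∃ fdag : Y → Set X,
      (∀ y, (fdag y).Nonempty) ∧
      (∀ y, (∃ x ∈ p, y ∈ f x) → fdag y = {x ∈ p | y ∈ f x}) ∧
      {q : X × Y | q.1 ∈ p ∧ q.2 ∈ f q.1}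
        = {q : X × Y | (∃ x₀ ∈ p, q.2 ∈ f x₀) ∧ q.1 ∈ fdag q.2} := by
  classical
  refine ⟨fun y => if h : ∃ x ∈ p, y ∈ f x then {x ∈ p | y ∈ f x} else p,
    ?_, ?_, ?_⟩
  · intro y
    by_cases h : ∃ x ∈ p, y ∈ f x
    · simp only [dif_pos h]
      obtain ⟨x, hx, hy⟩ := h
      exact ⟨x, hx, hy⟩
    · simpa [dif_neg h] using hp
  · intro y h; simp [dif_pos h]
  · ext ⟨x, y⟩
    constructor
    · rintro ⟨hx, hy⟩
      have h : ∃ x₀ ∈ p, y ∈ f x₀ := ⟨x, hx, hy⟩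
      exact ⟨h, by simp [dif_pos h, hx, hy]⟩
    · rintro ⟨h, hx⟩
      simp only [dif_pos h] at hx
      exact ⟨hx.1, hx.2⟩
end
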